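/- arXiv:2309.11401 — 5 statements merged into one kernel-verified Lean document; each statement's English description precedes it below -/
import Mathlib

section
/- Cumulant bound for compactly supported distributions: if μ is a Borel probability measure on ℝ with support contained in [-c, c], then for every integer k ≥ 1 the k-th cumulant of μ, i.e. the k-th derivative at t = 0 of the cumulant generating function K(t) = log ∫ e^{tx} dμ(x), satisfies |K^{(k)}(0)| ≤ (2ck)^k. -/
/-!
The cumulant generating function extends to `G = log ∘ F`, where `F z = E[exp (z X)]` is the complex
moment generating function. For `|X| ≤ c` and `‖z‖ c ≤ 1/4` one has `‖F z - 1‖ ≤ ‖z‖ c + (‖z‖ c)²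
≤ 5/16`, so `G` is holomorphic on the closed disc of radius `1 / (4c)` and bounded by `1/2` on its
boundary circle. Cauchy's estimate gives `|K^{(n)}(0)| ≤ n! (4c)^n / 2`, and `n! 2^n ≤ 2 n^n`
(Bernoulli's inequality `(1 + 1/n)^n ≥ 2`, inductively) turns this into `(2cn)^n`.
-/

open MeasureTheory Set
open scoped Nat

theorem Nat.two_mul_pow_self_le_succ_pow {n : ℕ} (hn : 0 < n) : 2 * n ^ n ≤ (n + 1) ^ n := by
  have hnR : (0 : ℝ) < n := by exact_mod_cast hn
  have hbern : (2 : ℝ) ≤ (1 + 1 / n) ^ n := by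
    have h := one_add_mul_le_pow (by linarith [one_div_pos.2 hnR] : (-2 : ℝ) ≤ 1 / n) n
    rwa [mul_one_div_cancel hnR.ne', one_add_one_eq_two] at h
  have : (2 : ℝ) * n ^ n ≤ (n + 1) ^ n :=
    calc (2 : ℝ) * n ^ n ≤ (1 + 1 / n) ^ n * n ^ n := by gcongr
      _ = (n + 1) ^ n := by rw [← mul_pow]; field_simp
  exact_mod_cast this

theorem Nat.factorial_mul_two_pow_le (n : ℕ) : n ! * 2 ^ n ≤ 2 * n ^ n := by
  induction n with
  | zero => simp
  | succ n ih =>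
    rcases n.eq_zero_or_pos with rfl | hn
    · simp
    calc (n + 1)! * 2 ^ (n + 1) = 2 * (n + 1) * (n ! * 2 ^ n) := by
          rw [Nat.factorial_succ, pow_succ]; ring
      _ ≤ 2 * (n + 1) * (2 * n ^ n) := by gcongr
      _ ≤ 2 * (n + 1) * (n + 1) ^ n := by gcongr; exact Nat.two_mul_pow_self_le_succ_pow hn
      _ = 2 * (n + 1) ^ (n + 1) := by ring

theorem Complex.norm_exp_sub_one_le_add_sq {w : ℂ} (hw : ‖w‖ ≤ 1) :
    ‖Complex.exp w - 1‖ ≤ ‖w‖ + ‖w‖ ^ 2 :=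
  calc ‖Complex.exp w - 1‖ = ‖w + (Complex.exp w - 1 - w)‖ := by ring_nf
    _ ≤ ‖w‖ + ‖Complex.exp w - 1 - w‖ := norm_add_le _ _
    _ ≤ ‖w‖ + ‖w‖ ^ 2 := by gcongr; exact Complex.norm_exp_sub_one_sub_id_le hw

open Filter Topology Complex in
theorem iteratedDeriv_re_comp_ofReal {e : ℂ → ℂ} {U : Set ℂ} (hU : IsOpen U)
    (he : DifferentiableOn ℂ e U) (n : ℕ) {t : ℝ} (ht : (t : ℂ) ∈ U) :
    iteratedDeriv n (fun x : ℝ => (e x).re) t = (iteratedDeriv n e t).re := by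
  induction n generalizing t with
  | zero => simp
  | succ n ih =>
    have hUℝ : IsOpen {x : ℝ | (x : ℂ) ∈ U} := hU.preimage continuous_ofReal
    have heq : iteratedDeriv n (fun x : ℝ => (e x).re) =ᶠ[𝓝 t]
        fun x => (iteratedDeriv n e x).re :=
      eventually_of_mem (hUℝ.mem_nhds ht) fun x hx => ih hx
    have hderiv : HasDerivAt (iteratedDeriv n e) (iteratedDeriv (n + 1) e t) t := by
      rw [iteratedDeriv_succ, iteratedDeriv_eq_iterate]
      exact ((he.analyticOnNhd hU).iterated_deriv n t ht).differentiableAt.hasDerivAt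
    rw [iteratedDeriv_succ, heq.deriv_eq, hderiv.real_of_complex.deriv]

namespace ProbabilityTheory

open Metric

variable {Ω : Type*} {m : MeasurableSpace Ω} {X : Ω → ℝ} {μ : Measure Ω} {c : ℝ}

noncomputable def complexCGF (X : Ω → ℝ) (μ : Measure Ω) (z : ℂ) : ℂ :=
  Complex.log (complexMGF X μ z)

lemma re_complexCGF_ofReal (t : ℝ) : (complexCGF X μ t).re = cgf X μ t := by
  rw [complexCGF, complexMGF_ofReal, Complex.log_ofReal_re, cgf]

lemma integrableExpSet_eq_univ_of_ae_abs_le [IsFiniteMeasure μ] (hX : AEMeasurable X μ)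
    (hb : ∀ᵐ ω ∂μ, |X ω| ≤ c) : integrableExpSet X μ = univ := by
  refine eq_univ_of_forall fun t => Integrable.of_bound (by fun_prop) (Real.exp (|t| * c)) ?_
  filter_upwards [hb] with ω hω
  rw [Real.norm_eq_abs, Real.abs_exp, Real.exp_le_exp]
  calc t * X ω ≤ |t| * |X ω| := by rw [← abs_mul]; exact le_abs_self _
    _ ≤ |t| * c := by gcongr

lemma differentiable_complexMGF_of_ae_abs_le [IsFiniteMeasure μ] (hX : AEMeasurable X μ)
    (hb : ∀ᵐ ω ∂μ, |X ω| ≤ c) : Differentiable ℂ (complexMGF X μ) := by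
  have := differentiableOn_complexMGF (X := X) (μ := μ)
  rw [integrableExpSet_eq_univ_of_ae_abs_le hX hb] at this
  exact differentiableOn_univ.1 (by simpa using this)

lemma norm_complexMGF_sub_one_le [IsProbabilityMeasure μ] (hX : AEMeasurable X μ)
    (hb : ∀ᵐ ω ∂μ, |X ω| ≤ c) {z : ℂ} (hz : ‖z‖ * c ≤ 1) :
    ‖complexMGF X μ z - 1‖ ≤ ‖z‖ * c + (‖z‖ * c) ^ 2 := by
  have hint : Integrable (fun ω => Complex.exp (z * X ω)) μ :=
    integrable_cexp_mul_of_re_mem_integrableExpSet hX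
      (by simp [integrableExpSet_eq_univ_of_ae_abs_le hX hb])
  have hsub : complexMGF X μ z - 1 = ∫ ω, (Complex.exp (z * X ω) - 1) ∂μ := by
    rw [integral_sub hint (integrable_const _)]
    simp [complexMGF]
  have hpointwise : ∀ᵐ ω ∂μ, ‖Complex.exp (z * X ω) - 1‖ ≤ ‖z‖ * c + (‖z‖ * c) ^ 2 := by
    filter_upwards [hb] with ω hω
    have hzX : ‖z * X ω‖ ≤ ‖z‖ * c := by
      rw [norm_mul, Complex.norm_real, Real.norm_eq_abs]
      gcongr
    calc ‖Complex.exp (z * X ω) - 1‖ ≤ ‖z * X ω‖ + ‖z * X ω‖ ^ 2 :=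
          Complex.norm_exp_sub_one_le_add_sq (hzX.trans hz)
      _ ≤ ‖z‖ * c + (‖z‖ * c) ^ 2 := by gcongr
  simpa [hsub] using norm_integral_le_of_norm_le_const hpointwise

lemma norm_complexCGF_le [IsProbabilityMeasure μ] (hX : AEMeasurable X μ)
    (hb : ∀ᵐ ω ∂μ, |X ω| ≤ c) {z : ℂ} (hz : ‖z‖ * c ≤ 1 / 4) :
    ‖complexCGF X μ z‖ ≤ 2 * (‖z‖ * c) := by
  obtain ⟨ω, hω⟩ := hb.exists
  have hzc : 0 ≤ ‖z‖ * c := mul_nonneg (norm_nonneg z) ((abs_nonneg _).trans hω)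
  have hmgf := norm_complexMGF_sub_one_le hX hb (z := z) (by linarith)
  have hhalf : ‖complexMGF X μ z - 1‖ ≤ 1 / 2 := by nlinarith
  calc ‖complexCGF X μ z‖ = ‖Complex.log (1 + (complexMGF X μ z - 1))‖ := by
        rw [complexCGF, add_sub_cancel]
    _ ≤ 3 / 2 * ‖complexMGF X μ z - 1‖ := Complex.norm_log_one_add_half_le_self hhalf
    _ ≤ 2 * (‖z‖ * c) := by nlinarith

lemma differentiableOn_complexCGF [IsProbabilityMeasure μ] (hX : AEMeasurable X μ)
    (hb : ∀ᵐ ω ∂μ, |X ω| ≤ c) (hc : 0 < c) :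
    DifferentiableOn ℂ (complexCGF X μ) (closedBall 0 (4 * c)⁻¹) := by
  intro z hz
  have hzc : ‖z‖ * c ≤ 1 / 4 := by
    rw [mem_closedBall_zero_iff] at hz
    calc ‖z‖ * c ≤ (4 * c)⁻¹ * c := by gcongr
      _ = 1 / 4 := by field_simp
  have hslit : complexMGF X μ z ∈ Complex.slitPlane := by
    have hmgf := norm_complexMGF_sub_one_le hX hb (z := z) (by linarith)
    have hlt : ‖complexMGF X μ z - 1‖ < 1 := by
      nlinarith [mul_nonneg (norm_nonneg z) hc.le]
    simpa using Complex.mem_slitPlane_of_norm_lt_one hlt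
  exact ((differentiable_complexMGF_of_ae_abs_le hX hb z).clog hslit).differentiableWithinAt

lemma norm_iteratedDeriv_complexCGF_le [IsProbabilityMeasure μ] (hX : AEMeasurable X μ)
    (hb : ∀ᵐ ω ∂μ, |X ω| ≤ c) (hc : 0 < c) (n : ℕ) :
    ‖iteratedDeriv n (complexCGF X μ) 0‖ ≤ n ! * (4 * c) ^ n / 2 := by
  have hR : 0 < (4 * c)⁻¹ := by positivity
  have hdiff : DiffContOnCl ℂ (complexCGF X μ) (ball 0 (4 * c)⁻¹) := by
    refine DifferentiableOn.diffContOnCl ?_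
    rw [closure_ball _ hR.ne']
    exact differentiableOn_complexCGF hX hb hc
  have hsphere : ∀ z ∈ sphere (0 : ℂ) (4 * c)⁻¹, ‖complexCGF X μ z‖ ≤ 1 / 2 := by
    intro z hz
    have hzc : ‖z‖ * c = 1 / 4 := by
      rw [mem_sphere_zero_iff_norm.1 hz]; field_simp
    exact (norm_complexCGF_le hX hb hzc.le).trans_eq (by rw [hzc]; norm_num)
  refine (Complex.norm_iteratedDeriv_le_of_forall_mem_sphere_norm_le n hR hdiff hsphere).trans_eq ?_
  rw [inv_pow, div_inv_eq_mul]
  ring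

lemma iteratedDeriv_cgf_eq_re_complexCGF [IsProbabilityMeasure μ] (hX : AEMeasurable X μ)
    (hb : ∀ᵐ ω ∂μ, |X ω| ≤ c) (hc : 0 < c) (n : ℕ) :
    iteratedDeriv n (cgf X μ) 0 = (iteratedDeriv n (complexCGF X μ) 0).re := by
  have hcgf : cgf X μ = fun t : ℝ => (complexCGF X μ t).re :=
    funext fun t => (re_complexCGF_ofReal t).symm
  have hR : 0 < (4 * c)⁻¹ := by positivity
  rw [hcgf, iteratedDeriv_re_comp_ofReal isOpen_ball
    ((differentiableOn_complexCGF hX hb hc).mono ball_subset_closedBall) n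
    (by simpa using mem_ball_self (x := (0 : ℂ)) hR), Complex.ofReal_zero]

theorem abs_iteratedDeriv_cgf_le [IsProbabilityMeasure μ] (hX : AEMeasurable X μ)
    (hb : ∀ᵐ ω ∂μ, |X ω| ≤ c) (hc : 0 < c) (n : ℕ) :
    |iteratedDeriv n (cgf X μ) 0| ≤ (2 * c * n) ^ n := by
  have hfact : (n ! : ℝ) * 2 ^ n ≤ 2 * n ^ n := by exact_mod_cast Nat.factorial_mul_two_pow_le n
  calc |iteratedDeriv n (cgf X μ) 0| ≤ ‖iteratedDeriv n (complexCGF X μ) 0‖ := by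
        rw [iteratedDeriv_cgf_eq_re_complexCGF hX hb hc]; exact Complex.abs_re_le_norm _
    _ ≤ n ! * (4 * c) ^ n / 2 := norm_iteratedDeriv_complexCGF_le hX hb hc n
    _ = (n ! * 2 ^ n) * (2 * c) ^ n / 2 := by
        rw [show (4 : ℝ) * c = 2 * (2 * c) by ring, mul_pow]; ring
    _ ≤ (2 * n ^ n) * (2 * c) ^ n / 2 := by gcongr
    _ = (2 * c * n) ^ n := by ring

end ProbabilityTheory

open ProbabilityTheory in
/-- **Cumulant bound for compactly supported distributions**: if `μ` is a Borel probability
measure supported in `[-c, c]` and `K(t) = log ∫ e^{tx} dμ(x)` is its cumulant generating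
function, then for every `k ≥ 1` the `k`-th cumulant `K^{(k)}(0)` satisfies
`|K^{(k)}(0)| ≤ (2ck)^k`. -/
theorem cumulant_bound_compact_support (c : ℝ) (hc : 0 < c)
    (μ : Measure ℝ) [IsProbabilityMeasure μ] (hμ : ∀ᵐ x ∂μ, x ∈ Icc (-c) c)
    (K : ℝ → ℝ) (hK : K = fun t => Real.log (∫ x, Real.exp (t * x) ∂μ)) :
    ∀ k : ℕ, 1 ≤ k → |iteratedDeriv k K 0| ≤ (2 * c * k) ^ k := by
  intro k _
  subst hK
  exact abs_iteratedDeriv_cgf_le aemeasurable_id (hμ.mono fun x hx => abs_le.2 hx) hc k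
end

section
/- Derivatives of the tilted log-density are cumulants: fix y₀ ∈ ℝ and let G̃_{y₀} be the probability measure on [-c, c] defined by dG̃_{y₀}(θ) = A · exp(y₀θ/σ² − θ²/(2σ²)) dG(θ), where A = A(G, y₀) is the normalizing constant, and let K(t) = log ∫ e^{tθ} dG̃_{y₀}(θ) be its cumulant generating function. Then for every integer k ≥ 1, the k-th derivative of y ↦ ℓ(G; y) = log f_G(y) + y²/(2σ²) at y₀ equals σ^{−2k} · K^{(k)}(0), the k-th cumulant of G̃_{y₀} divided by σ^{2k}. -/
open MeasureTheory Set

/-- The standard normal density `φ(z) = (2π)^{-1/2} e^{-z²/2}`. -/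
noncomputable def stdNormalPDF (z : ℝ) : ℝ := (Real.sqrt (2 * Real.pi))⁻¹ * Real.exp (-z ^ 2 / 2)

/-- The mixture (marginal) density `f_G(y) = (1/σ) ∫ φ((y−θ)/σ) dG(θ)`. -/
noncomputable def mixDens (σ : ℝ) (G : Measure ℝ) (y : ℝ) : ℝ :=
  (1 / σ) * ∫ θ, stdNormalPDF ((y - θ) / σ) ∂G

/-! Completing the square gives `f_G(y) e^{y²/(2σ²)} = (σ√(2π))⁻¹ ∫ e^{yθ/σ² − θ²/(2σ²)} dG(θ)`,
and at `y = y₀ + σ²t` this integral is `A⁻¹` times the moment generating function of `G̃_{y₀}`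
at `t`. Hence `ℓ(G; y) = const + K((y − y₀)/σ²)`, and the chain rule gives the claim; `K` is
smooth (indeed analytic) because `G̃_{y₀}` is a finite measure with compact support. -/

open ProbabilityTheory

theorem Continuous.integrable_of_ae_mem_compact {X E : Type*} [TopologicalSpace X] [T2Space X]
    [MeasurableSpace X] [OpensMeasurableSpace X] [NormedAddCommGroup E]
    {μ : Measure X} [IsFiniteMeasure μ] {K : Set X} (hK : IsCompact K) (hμ : ∀ᵐ x ∂μ, x ∈ K)
    {f : X → E} (hf : Continuous f) : Integrable f μ := by
  rw [← Measure.restrict_eq_self_of_ae_mem hμ]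
  exact hf.continuousOn.integrableOn_compact hK

theorem integral_withDensity_ofReal {X : Type*} [MeasurableSpace X] {μ : Measure X}
    {h : X → ℝ} (hh : Measurable h) (h_nonneg : ∀ x, 0 ≤ h x) (g : X → ℝ) :
    ∫ x, g x ∂μ.withDensity (fun x => ENNReal.ofReal (h x)) = ∫ x, h x * g x ∂μ := by
  rw [integral_withDensity_eq_integral_toReal_smul hh.ennreal_ofReal
    (ae_of_all _ fun _ => ENNReal.ofReal_lt_top)]
  simp only [ENNReal.toReal_ofReal (h_nonneg _), smul_eq_mul]

theorem contDiff_cgf_of_ae_mem_Icc {Ω : Type*} [MeasurableSpace Ω] {μ : Measure Ω}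
    [IsFiniteMeasure μ] {X : Ω → ℝ} {a b : ℝ} (hX : AEMeasurable X μ)
    (hXab : ∀ᵐ ω ∂μ, X ω ∈ Icc a b) {n : WithTop ℕ∞} : ContDiff ℝ n (cgf X μ) := by
  have hexp : integrableExpSet X μ = univ :=
    eq_univ_of_forall fun _ => integrable_exp_mul_of_mem_Icc hX hXab
  apply AnalyticOnNhd.contDiff
  simpa [hexp] using analyticOnNhd_cgf (X := X) (μ := μ)

theorem iteratedDeriv_comp_mul_sub {f : ℝ → ℝ} {n : ℕ} (hf : ContDiff ℝ n f) (a b x : ℝ) :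
    iteratedDeriv n (fun y => f (a * (y - b))) x = a ^ n * iteratedDeriv n f (a * (x - b)) := by
  rw [iteratedDeriv_comp_sub_const n (fun z => f (a * z)) b, iteratedDeriv_comp_const_mul hf]

noncomputable def tiltWeight (σ y θ : ℝ) : ℝ := Real.exp (y * θ / σ ^ 2 - θ ^ 2 / (2 * σ ^ 2))

section tiltWeight

variable {σ : ℝ}

theorem stdNormalPDF_sub_div (hσ : σ ≠ 0) (y θ : ℝ) :
    stdNormalPDF ((y - θ) / σ) =
      (Real.sqrt (2 * Real.pi))⁻¹ * Real.exp (-y ^ 2 / (2 * σ ^ 2)) * tiltWeight σ y θ := by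
  rw [stdNormalPDF, tiltWeight, mul_assoc, ← Real.exp_add]
  congr 2
  field_simp
  ring

theorem mixDens_eq_mul_integral_tiltWeight (hσ : σ ≠ 0) (G : Measure ℝ) (y : ℝ) :
    mixDens σ G y = (σ * Real.sqrt (2 * Real.pi))⁻¹ * Real.exp (-y ^ 2 / (2 * σ ^ 2)) *
      ∫ θ, tiltWeight σ y θ ∂G := by
  simp_rw [mixDens, stdNormalPDF_sub_div hσ, integral_const_mul]
  ring

theorem log_mixDens_add_sq_div (hσ : σ ≠ 0) {G : Measure ℝ} {y : ℝ}
    (hM : ∫ θ, tiltWeight σ y θ ∂G ≠ 0) :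
    Real.log (mixDens σ G y) + y ^ 2 / (2 * σ ^ 2) =
      Real.log (∫ θ, tiltWeight σ y θ ∂G) - Real.log (σ * Real.sqrt (2 * Real.pi)) := by
  have hs : σ * Real.sqrt (2 * Real.pi) ≠ 0 := mul_ne_zero hσ (by positivity)
  rw [mixDens_eq_mul_integral_tiltWeight hσ, Real.log_mul (by positivity) hM,
    Real.log_mul (inv_ne_zero hs) (Real.exp_ne_zero _), Real.log_inv, Real.log_exp]
  ring

theorem continuous_tiltWeight (σ y : ℝ) : Continuous (tiltWeight σ y) := by
  unfold tiltWeight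
  fun_prop

theorem integral_tiltWeight_pos {G : Measure ℝ} [IsProbabilityMeasure G] {c : ℝ}
    (hG : ∀ᵐ θ ∂G, θ ∈ Icc (-c) c) (y : ℝ) : 0 < ∫ θ, tiltWeight σ y θ ∂G :=
  integral_exp_pos ((continuous_tiltWeight σ y).integrable_of_ae_mem_compact isCompact_Icc hG)

theorem tiltWeight_mul_exp (hσ : σ ≠ 0) (y s θ : ℝ) :
    tiltWeight σ y θ * Real.exp (s * θ) = tiltWeight σ (y + σ ^ 2 * s) θ := by
  rw [tiltWeight, tiltWeight, ← Real.exp_add]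
  congr 1
  field_simp
  ring

theorem mgf_withDensity_tiltWeight (hσ : σ ≠ 0) (G : Measure ℝ) {A : ℝ} (hA : 0 ≤ A) (y s : ℝ) :
    mgf id (G.withDensity fun θ => ENNReal.ofReal (A * tiltWeight σ y θ)) s =
      A * ∫ θ, tiltWeight σ (y + σ ^ 2 * s) θ ∂G := by
  have hmeas : Measurable fun θ => A * tiltWeight σ y θ :=
    ((continuous_tiltWeight σ y).const_mul A).measurable
  simp only [mgf, id, integral_withDensity_ofReal hmeas
    (fun θ => mul_nonneg hA (Real.exp_nonneg _)), mul_assoc, tiltWeight_mul_exp hσ,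
    integral_const_mul]

end tiltWeight

theorem tiltedLogDens_derivs_are_cumulants_general (σ c : ℝ) (hσ : 0 < σ)
    (G : Measure ℝ) [IsProbabilityMeasure G] (hG : ∀ᵐ θ ∂G, θ ∈ Icc (-c) c)
    (y₀ : ℝ) (A : ℝ)
    (hA : A = (∫ θ, Real.exp (y₀ * θ / σ ^ 2 - θ ^ 2 / (2 * σ ^ 2)) ∂G)⁻¹)
    (Gtilt : Measure ℝ)
    (hGtilt : Gtilt = G.withDensity
      (fun θ => ENNReal.ofReal (A * Real.exp (y₀ * θ / σ ^ 2 - θ ^ 2 / (2 * σ ^ 2)))))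
    (K : ℝ → ℝ) (hK : K = fun t => Real.log (∫ θ, Real.exp (t * θ) ∂Gtilt)) :
    ∀ k : ℕ, 1 ≤ k →
      iteratedDeriv k (fun y => Real.log (mixDens σ G y) + y ^ 2 / (2 * σ ^ 2)) y₀
        = iteratedDeriv k K 0 / σ ^ (2 * k) := by
  intro k hk
  have hσ2 : σ ^ 2 ≠ 0 := by positivity
  have hM := integral_tiltWeight_pos (σ := σ) hG
  have hApos : 0 < A := hA ▸ inv_pos.mpr (hM y₀)
  have hK_cgf : K = cgf id Gtilt := hK
  have hGtilt' : Gtilt = G.withDensity fun θ => ENNReal.ofReal (A * tiltWeight σ y₀ θ) := hGtilt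
  have hK_mgf (s : ℝ) : K s = Real.log (A * ∫ θ, tiltWeight σ (y₀ + σ ^ 2 * s) θ ∂G) := by
    rw [hK_cgf, cgf, hGtilt', mgf_withDensity_tiltWeight hσ.ne' G hApos.le]
  have : IsFiniteMeasure Gtilt := hGtilt' ▸ isFiniteMeasure_withDensity_ofReal
    ((continuous_tiltWeight σ y₀).const_mul A |>.integrable_of_ae_mem_compact isCompact_Icc hG).2
  have hK_smooth : ContDiff ℝ k K := hK_cgf ▸ contDiff_cgf_of_ae_mem_Icc aemeasurable_id
    (hGtilt' ▸ (withDensity_absolutelyContinuous _ _).ae_le hG)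
  have hℓ : (fun y => Real.log (mixDens σ G y) + y ^ 2 / (2 * σ ^ 2)) =
      fun y => -(Real.log (σ * Real.sqrt (2 * Real.pi)) + Real.log A) +
        K ((σ ^ 2)⁻¹ * (y - y₀)) := by
    funext y
    rw [log_mixDens_add_sq_div hσ.ne' (hM y).ne', hK_mgf, mul_inv_cancel_left₀ hσ2,
      add_sub_cancel, Real.log_mul hApos.ne' (hM y).ne']
    ring
  rw [hℓ, iteratedDeriv_const_add hk, iteratedDeriv_comp_mul_sub hK_smooth, sub_self, mul_zero,
    pow_mul, inv_pow, inv_mul_eq_div]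

/-- **Derivatives of the tilted log-density are cumulants**: for the tilted measure
`dG̃_{y₀}(θ) = A exp(y₀θ/σ² − θ²/(2σ²)) dG(θ)` with cumulant generating function `K`,
the `k`-th derivative of `y ↦ log f_G(y) + y²/(2σ²)` at `y₀` equals `K^{(k)}(0) / σ^{2k}`. -/
theorem tiltedLogDens_derivs_are_cumulants (σ c : ℝ) (hσ : 0 < σ) (hc : 0 < c)
    (G : Measure ℝ) [IsProbabilityMeasure G] (hG : ∀ᵐ θ ∂G, θ ∈ Icc (-c) c)
    (y₀ : ℝ) (A : ℝ)
    (hA : A = (∫ θ, Real.exp (y₀ * θ / σ ^ 2 - θ ^ 2 / (2 * σ ^ 2)) ∂G)⁻¹)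
    (Gtilt : Measure ℝ)
    (hGtilt : Gtilt = G.withDensity
      (fun θ => ENNReal.ofReal (A * Real.exp (y₀ * θ / σ ^ 2 - θ ^ 2 / (2 * σ ^ 2)))))
    (K : ℝ → ℝ) (hK : K = fun t => Real.log (∫ θ, Real.exp (t * θ) ∂Gtilt)) :
    ∀ k : ℕ, 1 ≤ k →
      iteratedDeriv k (fun y => Real.log (mixDens σ G y) + y ^ 2 / (2 * σ ^ 2)) y₀
        = iteratedDeriv k K 0 / σ ^ (2 * k) :=
  tiltedLogDens_derivs_are_cumulants_general σ c hσ G hG y₀ A hA Gtilt hGtilt K hK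
end

section
/- Derivative of the posterior mean equals the scaled posterior variance: for every y ∈ ℝ, δ_G′(y) = V_G(y)/σ², where V_G(y) = (∫ θ² φ((y−θ)/σ) dG(θ)) / (∫ φ((y−θ)/σ) dG(θ)) − δ_G(y)² is the posterior variance of θ given Y = y. Consequently 0 ≤ δ_G′(y) ≤ c²/σ² for all y. -/
open MeasureTheory Set

/-- The posterior mean `δ_G(y)`. -/
noncomputable def postMean (σ : ℝ) (G : Measure ℝ) (y : ℝ) : ℝ :=
  (∫ θ, θ * stdNormalPDF ((y - θ) / σ) ∂G) / ∫ θ, stdNormalPDF ((y - θ) / σ) ∂G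

/-- The posterior variance `V_G(y)` of `θ` given `Y = y`. -/
noncomputable def postVar (σ : ℝ) (G : Measure ℝ) (y : ℝ) : ℝ :=
  (∫ θ, θ ^ 2 * stdNormalPDF ((y - θ) / σ) ∂G) / (∫ θ, stdNormalPDF ((y - θ) / σ) ∂G)
    - (postMean σ G y) ^ 2

lemma stdNormalPDF_pos (z : ℝ) : 0 < stdNormalPDF z := by
  unfold stdNormalPDF
  positivity

lemma stdNormalPDF_le (z : ℝ) : stdNormalPDF z ≤ (Real.sqrt (2 * Real.pi))⁻¹ := by
  unfold stdNormalPDF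
  have h1 : Real.exp (-z ^ 2 / 2) ≤ 1 := by
    rw [Real.exp_le_one_iff]; nlinarith [sq_nonneg z]
  calc (Real.sqrt (2 * Real.pi))⁻¹ * Real.exp (-z ^ 2 / 2)
      ≤ (Real.sqrt (2 * Real.pi))⁻¹ * 1 := by
        apply mul_le_mul_of_nonneg_left h1; positivity
    _ = _ := mul_one _

lemma abs_mul_stdNormalPDF_le (z : ℝ) : |z| * stdNormalPDF z ≤ (Real.sqrt (2 * Real.pi))⁻¹ := by
  unfold stdNormalPDF
  have h1 : |z| * Real.exp (-z ^ 2 / 2) ≤ 1 := by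
    have h2 : |z| ≤ Real.exp (z ^ 2 / 2) := by
      have := Real.add_one_le_exp (z ^ 2 / 2)
      nlinarith [sq_nonneg (|z| - 1), sq_abs z]
    have h3 : Real.exp (-z ^ 2 / 2) = (Real.exp (z ^ 2 / 2))⁻¹ := by
      rw [← Real.exp_neg]; ring_nf
    rw [h3]
    rw [mul_inv_le_iff₀ (Real.exp_pos _), one_mul]
    exact h2
  calc |z| * ((Real.sqrt (2 * Real.pi))⁻¹ * Real.exp (-z ^ 2 / 2))
      = (Real.sqrt (2 * Real.pi))⁻¹ * (|z| * Real.exp (-z ^ 2 / 2)) := by ring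
    _ ≤ (Real.sqrt (2 * Real.pi))⁻¹ * 1 := by
        apply mul_le_mul_of_nonneg_left h1; positivity
    _ = _ := mul_one _

lemma stdNormalPDF_continuous : Continuous stdNormalPDF := by
  unfold stdNormalPDF; fun_prop

lemma hasDerivAt_w (σ : ℝ) (hσ : σ ≠ 0) (θ x : ℝ) :
    HasDerivAt (fun y => stdNormalPDF ((y - θ) / σ))
      (((θ - x) / σ ^ 2) * stdNormalPDF ((x - θ) / σ)) x := by
  have h1 : HasDerivAt (fun y : ℝ => (y - θ) / σ) (1 / σ) x := by
    simpa using ((hasDerivAt_id x).sub_const θ).div_const σ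
  have h3 : HasDerivAt (fun y : ℝ => -((y - θ) / σ) ^ 2 / 2)
      (-(2 * ((x - θ) / σ) ^ 1 * (1 / σ)) / 2) x := ((h1.pow 2).neg).div_const 2
  have h4 := h3.exp
  have h5 := h4.const_mul (Real.sqrt (2 * Real.pi))⁻¹
  refine h5.congr_deriv ?_
  unfold stdNormalPDF
  field_simp
  ring

lemma integrable_moment (σ c : ℝ) (hσ : 0 < σ) (hc : 0 < c) (G : Measure ℝ)
    [IsProbabilityMeasure G] (hG : ∀ᵐ θ ∂G, θ ∈ Icc (-c) c) (k : ℕ) (x : ℝ) :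
    Integrable (fun θ => θ ^ k * stdNormalPDF ((x - θ) / σ)) G := by
  apply Integrable.mono' (integrable_const (c ^ k * (Real.sqrt (2 * Real.pi))⁻¹))
  · exact (Continuous.mul (continuous_pow k)
      (stdNormalPDF_continuous.comp (by fun_prop))).aestronglyMeasurable
  · filter_upwards [hG] with θ hθ
    have hθc : |θ| ≤ c := abs_le.mpr ⟨hθ.1, hθ.2⟩
    rw [Real.norm_eq_abs, abs_mul, abs_pow, abs_of_pos (stdNormalPDF_pos _)]
    exact mul_le_mul (pow_le_pow_left₀ (abs_nonneg θ) hθc k) (stdNormalPDF_le _)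
      (stdNormalPDF_pos _).le (by positivity)

lemma hasDerivAt_moment (σ c : ℝ) (hσ : 0 < σ) (hc : 0 < c) (G : Measure ℝ)
    [IsProbabilityMeasure G] (hG : ∀ᵐ θ ∂G, θ ∈ Icc (-c) c) (k : ℕ) (x : ℝ) :
    Integrable (fun θ => θ ^ k * (((θ - x) / σ ^ 2) * stdNormalPDF ((x - θ) / σ))) G ∧
    HasDerivAt (fun y => ∫ θ, θ ^ k * stdNormalPDF ((y - θ) / σ) ∂G)
      (∫ θ, θ ^ k * (((θ - x) / σ ^ 2) * stdNormalPDF ((x - θ) / σ)) ∂G) x := by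
  refine hasDerivAt_integral_of_dominated_loc_of_deriv_le (s := Metric.ball x 1)
    (bound := fun _ => c ^ k * ((Real.sqrt (2 * Real.pi))⁻¹ / σ))
    (F' := fun y θ => θ ^ k * (((θ - y) / σ ^ 2) * stdNormalPDF ((y - θ) / σ)))
    (Metric.ball_mem_nhds x one_pos) ?_ ?_ ?_ ?_ ?_ ?_
  · filter_upwards with y
    exact (Continuous.mul (continuous_pow k)
      (stdNormalPDF_continuous.comp (by fun_prop))).aestronglyMeasurable
  · exact integrable_moment σ c hσ hc G hG k x
  · apply Continuous.aestronglyMeasurable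
    have : Continuous fun θ : ℝ => stdNormalPDF ((x - θ) / σ) :=
      stdNormalPDF_continuous.comp (by fun_prop)
    fun_prop
  · filter_upwards [hG] with θ hθ
    intro z _
    have hθc : |θ| ≤ c := abs_le.mpr ⟨hθ.1, hθ.2⟩
    rw [Real.norm_eq_abs, abs_mul, abs_pow, abs_mul, abs_of_pos (stdNormalPDF_pos _)]
    have key : |(θ - z) / σ ^ 2| * stdNormalPDF ((z - θ) / σ)
        ≤ (Real.sqrt (2 * Real.pi))⁻¹ / σ := by
      have h1 : |(θ - z) / σ ^ 2| = |(z - θ) / σ| / σ := by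
        rw [abs_div, abs_div, abs_sub_comm θ z, abs_of_pos hσ,
          abs_of_pos (pow_pos hσ 2), div_div, sq]
      rw [h1, div_mul_eq_mul_div, div_le_div_iff₀ hσ hσ]
      have := abs_mul_stdNormalPDF_le ((z - θ) / σ)
      nlinarith [stdNormalPDF_pos ((z - θ) / σ)]
    exact mul_le_mul (pow_le_pow_left₀ (abs_nonneg θ) hθc k) key
      (mul_nonneg (abs_nonneg _) (stdNormalPDF_pos _).le) (by positivity)
  · exact integrable_const _
  · filter_upwards with θ
    intro z _
    exact (hasDerivAt_w σ hσ.ne' θ z).const_mul _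

lemma int0_pos (σ c : ℝ) (hσ : 0 < σ) (hc : 0 < c) (G : Measure ℝ) [IsProbabilityMeasure G]
    (hG : ∀ᵐ θ ∂G, θ ∈ Icc (-c) c) (x : ℝ) :
    0 < ∫ θ, stdNormalPDF ((x - θ) / σ) ∂G := by
  have hw_int : Integrable (fun θ => stdNormalPDF ((x - θ) / σ)) G := by
    have := integrable_moment σ c hσ hc G hG 0 x
    simpa using this
  have hlb : ∀ᵐ θ ∂G, stdNormalPDF ((|x| + c) / σ) ≤ stdNormalPDF ((x - θ) / σ) := by
    filter_upwards [hG] with θ hθ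
    have hθc : |θ| ≤ c := abs_le.mpr ⟨hθ.1, hθ.2⟩
    unfold stdNormalPDF
    have h1 : ((x - θ) / σ) ^ 2 ≤ ((|x| + c) / σ) ^ 2 := by
      rw [div_pow, div_pow]
      apply div_le_div_of_nonneg_right _ (by positivity)
      nlinarith [le_abs_self x, neg_abs_le x, le_abs_self θ, neg_abs_le θ, abs_nonneg x,
        abs_nonneg θ, mul_le_mul_of_nonneg_left hθc (abs_nonneg x)]
    have h2 : Real.exp (-((|x| + c) / σ) ^ 2 / 2) ≤ Real.exp (-((x - θ) / σ) ^ 2 / 2) := by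
      apply Real.exp_le_exp.mpr; linarith
    apply mul_le_mul_of_nonneg_left h2 (by positivity)
  have := integral_mono_ae (integrable_const (stdNormalPDF ((|x| + c) / σ))) hw_int hlb
  rw [integral_const] at this
  simp only [probReal_univ, ENNReal.toReal_one, one_smul] at this
  exact lt_of_lt_of_le (stdNormalPDF_pos _) this

/-- **Derivative of the posterior mean equals the scaled posterior variance**:
`δ_G′(y) = V_G(y)/σ²`, and consequently `0 ≤ δ_G′(y) ≤ c²/σ²`. -/
theorem deriv_postMean_eq_postVar (σ c : ℝ) (hσ : 0 < σ) (hc : 0 < c)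
    (G : Measure ℝ) [IsProbabilityMeasure G] (hG : ∀ᵐ θ ∂G, θ ∈ Icc (-c) c) :
    ∀ y : ℝ, deriv (postMean σ G) y = postVar σ G y / σ ^ 2
      ∧ 0 ≤ deriv (postMean σ G) y ∧ deriv (postMean σ G) y ≤ c ^ 2 / σ ^ 2 := by
  intro y
  have hint : ∀ k : ℕ, Integrable (fun θ => θ ^ k * stdNormalPDF ((y - θ) / σ)) G :=
    fun k => integrable_moment σ c hσ hc G hG k y
  set w : ℝ → ℝ := fun θ => stdNormalPDF ((y - θ) / σ) with hw
  set I0 : ℝ := ∫ θ, w θ ∂G with hI0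
  set I1 : ℝ := ∫ θ, θ * w θ ∂G with hI1
  set I2 : ℝ := ∫ θ, θ ^ 2 * w θ ∂G with hI2
  have hI0pos : 0 < I0 := int0_pos σ c hσ hc G hG y
  have hσ2 : (0:ℝ) < σ ^ 2 := by positivity
  -- integrability facts
  have hint0 : Integrable w G := by simpa using hint 0
  have hint1 : Integrable (fun θ => θ * w θ) G := by simpa using hint 1
  have hint2 : Integrable (fun θ => θ ^ 2 * w θ) G := hint 2
  -- derivatives of the moments
  have der0 := (hasDerivAt_moment σ c hσ hc G hG 0 y).2
  have der1 := (hasDerivAt_moment σ c hσ hc G hG 1 y).2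
  simp only [pow_zero, one_mul] at der0
  simp only [pow_one] at der1
  -- rewrite the derivative integrands
  have hD0 : (∫ θ, (θ - y) / σ ^ 2 * stdNormalPDF ((y - θ) / σ) ∂G) = (I1 - y * I0) / σ ^ 2 := by
    have heq : (fun θ => (θ - y) / σ ^ 2 * stdNormalPDF ((y - θ) / σ))
        = fun θ => (σ ^ 2)⁻¹ * (θ * w θ) - (y * (σ ^ 2)⁻¹) * w θ := by
      funext θ; simp only [hw]; field_simp
    rw [heq, integral_sub (hint1.const_mul _) (hint0.const_mul _), integral_const_mul,
      integral_const_mul]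
    field_simp
    rfl
  have hD1 : (∫ θ, θ * ((θ - y) / σ ^ 2 * stdNormalPDF ((y - θ) / σ)) ∂G)
      = (I2 - y * I1) / σ ^ 2 := by
    have heq : (fun θ => θ * ((θ - y) / σ ^ 2 * stdNormalPDF ((y - θ) / σ)))
        = fun θ => (σ ^ 2)⁻¹ * (θ ^ 2 * w θ) - (y * (σ ^ 2)⁻¹) * (θ * w θ) := by
      funext θ; simp only [hw]; field_simp
    rw [heq, integral_sub (hint2.const_mul _) (hint1.const_mul _), integral_const_mul,
      integral_const_mul]
    field_simp
    rfl
  rw [hD0] at der0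
  rw [hD1] at der1
  -- derivative of the quotient
  have hq : HasDerivAt (postMean σ G)
      (((I2 - y * I1) / σ ^ 2 * I0 - I1 * ((I1 - y * I0) / σ ^ 2)) / I0 ^ 2) y := by
    have := der1.div der0 hI0pos.ne'
    exact this
  have hderiv : deriv (postMean σ G) y = (I2 * I0 - I1 ^ 2) / (σ ^ 2 * I0 ^ 2) := by
    rw [hq.deriv]
    field_simp
    ring
  -- key inequality : I1 ^ 2 ≤ I2 * I0
  have hkey : I1 ^ 2 ≤ I2 * I0 := by
    set d : ℝ := I1 / I0 with hd
    have hnn : 0 ≤ ∫ θ, (θ - d) ^ 2 * w θ ∂G :=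
      integral_nonneg fun θ => mul_nonneg (sq_nonneg _) (stdNormalPDF_pos _).le
    have hexp : (∫ θ, (θ - d) ^ 2 * w θ ∂G) = I2 - (2 * d) * I1 + d ^ 2 * I0 := by
      have heq : (fun θ => (θ - d) ^ 2 * w θ)
          = fun θ => θ ^ 2 * w θ - (2 * d) * (θ * w θ) + d ^ 2 * w θ := by
        funext θ; ring
      have ha : Integrable (fun θ => θ ^ 2 * w θ - 2 * d * (θ * w θ)) G :=
        hint2.sub (hint1.const_mul _)
      rw [heq, integral_add ha (hint0.const_mul _),
        integral_sub hint2 (hint1.const_mul _), integral_const_mul, integral_const_mul]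
    rw [hexp] at hnn
    have h3 : I2 - (2 * d) * I1 + d ^ 2 * I0 = (I2 * I0 - I1 ^ 2) / I0 := by
      rw [hd]; field_simp; ring
    rw [h3, le_div_iff₀ hI0pos] at hnn
    nlinarith
  -- upper bound : I2 ≤ c ^ 2 * I0
  have hI2le : I2 ≤ c ^ 2 * I0 := by
    have hmono : ∀ᵐ θ ∂G, θ ^ 2 * w θ ≤ c ^ 2 * w θ := by
      filter_upwards [hG] with θ hθ
      have hθc : |θ| ≤ c := abs_le.mpr ⟨hθ.1, hθ.2⟩
      have : θ ^ 2 ≤ c ^ 2 := by nlinarith [sq_abs θ, abs_nonneg θ]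
      exact mul_le_mul_of_nonneg_right this (stdNormalPDF_pos _).le
    have := integral_mono_ae hint2 (hint0.const_mul (c ^ 2)) hmono
    rwa [integral_const_mul] at this
  refine ⟨?_, ?_, ?_⟩
  · rw [hderiv]
    unfold postVar postMean
    rw [← hw, ← hI0, ← hI1, ← hI2]
    field_simp
  · rw [hderiv]
    apply div_nonneg (by linarith) (by positivity)
  · rw [hderiv, div_le_div_iff₀ (by positivity) hσ2]
    nlinarith [mul_le_mul_of_nonneg_right hI2le hI0pos.le, sq_nonneg I1, mul_pos hσ2 hσ2,
      sq_nonneg (I1 * σ)]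
end

section
/- Stein's unbiased risk identity: let δ : ℝ → ℝ be continuously differentiable with bounded derivative, and let Y be a random variable with distribution N(θ, σ²). Then E[(δ(Y) − θ)²] = E[(δ(Y) − Y)²] + 2σ² E[δ′(Y) − 1] + σ². -/
open MeasureTheory Set

/-- The density `y ↦ (1/σ) φ((y−θ)/σ)` of the normal distribution `N(θ, σ²)`. -/
noncomputable def normalPDF (θ σ : ℝ) (y : ℝ) : ℝ := (1 / σ) * stdNormalPDF ((y - θ) / σ)

namespace SteinAux

lemma normalPDF_eq {σ : ℝ} (hσ : 0 < σ) (θ y : ℝ) :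
    normalPDF θ σ y
      = (σ * Real.sqrt (2 * Real.pi))⁻¹ * Real.exp (-(2 * σ ^ 2)⁻¹ * (y - θ) ^ 2) := by
  unfold normalPDF stdNormalPDF
  have h : -((y - θ) / σ) ^ 2 / 2 = -(2 * σ ^ 2)⁻¹ * (y - θ) ^ 2 := by
    rw [div_pow]; ring
  rw [h, one_div, mul_inv]
  ring

lemma normalPDF_pos {σ : ℝ} (hσ : 0 < σ) (θ y : ℝ) : 0 < normalPDF θ σ y := by
  rw [normalPDF_eq hσ]
  have h2π : 0 < Real.sqrt (2 * Real.pi) := Real.sqrt_pos.2 (by positivity)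
  positivity

lemma continuous_normalPDF (θ σ : ℝ) : Continuous (normalPDF θ σ) := by
  unfold normalPDF stdNormalPDF
  continuity

lemma integrable_sq_mul_exp {b : ℝ} (hb : 0 < b) :
    Integrable fun x : ℝ => x ^ 2 * Real.exp (-b * x ^ 2) := by
  apply Integrable.mono'
    ((integrable_exp_neg_mul_sq (show (0:ℝ) < b / 2 by positivity)).const_mul (2 / b))
  · exact ((continuous_pow 2).mul (by continuity)).aestronglyMeasurable
  · refine Filter.Eventually.of_forall fun x => ?_
    have hx : x ^ 2 ≤ (2 / b) * Real.exp ((b / 2) * x ^ 2) := by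
      have h := Real.add_one_le_exp ((b / 2) * x ^ 2)
      have hb2 : (0:ℝ) < 2 / b := by positivity
      have e2 : (2 / b) * ((b / 2) * x ^ 2 + 1) = x ^ 2 + 2 / b := by
        field_simp
      have h3 := mul_le_mul_of_nonneg_left h hb2.le
      linarith
    have hnorm : ‖x ^ 2 * Real.exp (-b * x ^ 2)‖ = x ^ 2 * Real.exp (-b * x ^ 2) := by
      rw [Real.norm_eq_abs, abs_mul, abs_of_nonneg (sq_nonneg x),
        abs_of_nonneg (Real.exp_pos _).le]
    rw [hnorm]
    calc x ^ 2 * Real.exp (-b * x ^ 2)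
        ≤ ((2 / b) * Real.exp ((b / 2) * x ^ 2)) * Real.exp (-b * x ^ 2) :=
          mul_le_mul_of_nonneg_right hx (Real.exp_pos _).le
      _ = (2 / b) * Real.exp (-(b / 2) * x ^ 2) := by
          rw [mul_assoc, ← Real.exp_add]
          ring_nf

/-- Master integrability lemma: any a.e. measurable function with quadratic growth
(in terms of `|y - θ|`) is integrable against the normal density. -/
lemma integrable_growth_mul_normalPDF {σ θ : ℝ} (hσ : 0 < σ) {f : ℝ → ℝ}
    (hf : AEStronglyMeasurable f volume) {A : ℝ}
    (hA : ∀ y, |f y| ≤ A * (1 + |y - θ|) ^ 2) :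
    Integrable fun y => f y * normalPDF θ σ y := by
  set b : ℝ := (2 * σ ^ 2)⁻¹ with hbdef
  have hb : 0 < b := by positivity
  set c : ℝ := (σ * Real.sqrt (2 * Real.pi))⁻¹ with hcdef
  have h2π : 0 < Real.sqrt (2 * Real.pi) := Real.sqrt_pos.2 (by positivity)
  have hc : 0 < c := by positivity
  have hA0 : 0 ≤ A := by
    have := hA θ
    simp only [sub_self, abs_zero, add_zero, one_pow, mul_one] at this
    exact (abs_nonneg _).trans this
  have g0 : Integrable fun y : ℝ => Real.exp (-b * (y - θ) ^ 2) :=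
    (integrable_exp_neg_mul_sq hb).comp_sub_right θ
  have g2 : Integrable fun y : ℝ => (y - θ) ^ 2 * Real.exp (-b * (y - θ) ^ 2) :=
    (integrable_sq_mul_exp hb).comp_sub_right θ
  apply Integrable.mono' ((g0.const_mul (2 * A * c)).add (g2.const_mul (2 * A * c)))
  · exact hf.mul (continuous_normalPDF θ σ).aestronglyMeasurable
  · refine Filter.Eventually.of_forall fun y => ?_
    have hp := normalPDF_eq hσ θ y
    have hppos := (normalPDF_pos hσ θ y).le
    have he : normalPDF θ σ y = c * Real.exp (-b * (y - θ) ^ 2) := hp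
    rw [Real.norm_eq_abs, abs_mul, abs_of_nonneg hppos, he]
    have hexp := (Real.exp_pos (-b * (y - θ) ^ 2)).le
    have habs := abs_nonneg (y - θ)
    have hfy := hA y
    have key : |f y| ≤ A * (2 + 2 * (y - θ) ^ 2) := by
      have h1 : (1 + |y - θ|) ^ 2 ≤ 2 + 2 * (y - θ) ^ 2 := by
        have := sq_abs (y - θ)
        nlinarith [sq_nonneg (1 - |y - θ|)]
      calc |f y| ≤ A * (1 + |y - θ|) ^ 2 := hfy
        _ ≤ A * (2 + 2 * (y - θ) ^ 2) := by nlinarith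
    have hfy0 := abs_nonneg (f y)
    calc |f y| * (c * Real.exp (-b * (y - θ) ^ 2))
        ≤ (A * (2 + 2 * (y - θ) ^ 2)) * (c * Real.exp (-b * (y - θ) ^ 2)) := by
          apply mul_le_mul_of_nonneg_right key (by positivity)
      _ = 2 * A * c * Real.exp (-b * (y - θ) ^ 2)
          + 2 * A * c * ((y - θ) ^ 2 * Real.exp (-b * (y - θ) ^ 2)) := by ring

lemma hasDerivAt_normalPDF {σ : ℝ} (hσ : 0 < σ) (θ y : ℝ) :
    HasDerivAt (normalPDF θ σ) (-(σ ^ 2)⁻¹ * ((y - θ) * normalPDF θ σ y)) y := by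
  have h := ((((hasDerivAt_id y).sub_const θ).pow 2).const_mul
      (-(2 * σ ^ 2)⁻¹)).exp.const_mul ((σ * Real.sqrt (2 * Real.pi))⁻¹)
  have h2 : HasDerivAt (normalPDF θ σ)
      ((σ * Real.sqrt (2 * Real.pi))⁻¹ *
        (Real.exp (-(2 * σ ^ 2)⁻¹ * (y - θ) ^ 2) *
          (-(2 * σ ^ 2)⁻¹ * (↑2 * (y - θ) ^ 1 * 1)))) y := by
    apply h.congr_of_eventuallyEq
    exact Filter.Eventually.of_forall fun x => normalPDF_eq hσ θ x
  convert h2 using 1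
  rw [normalPDF_eq hσ θ y]
  push_cast
  ring

/-- Stein's lemma (integration by parts form). -/
lemma stein {σ θ : ℝ} (hσ : 0 < σ) (g g' : ℝ → ℝ) (hg : ∀ x, HasDerivAt g (g' x) x)
    (h1 : Integrable fun y => g y * ((y - θ) * normalPDF θ σ y))
    (h2 : Integrable fun y => g' y * normalPDF θ σ y)
    (h3 : Integrable fun y => g y * normalPDF θ σ y) :
    ∫ y, g y * ((y - θ) * normalPDF θ σ y) = σ ^ 2 * ∫ y, g' y * normalPDF θ σ y := by
  set p := normalPDF θ σ with hpdef
  set v' : ℝ → ℝ := fun y => -(σ ^ 2)⁻¹ * ((y - θ) * p y) with hv'def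
  have hv : ∀ y, HasDerivAt p (v' y) y := fun y => hasDerivAt_normalPDF hσ θ y
  have huv' : Integrable (g * v') := by
    have := h1.const_mul (-(σ ^ 2)⁻¹)
    apply this.congr
    refine Filter.Eventually.of_forall fun y => ?_
    simp only [Pi.mul_apply, hv'def]
    ring
  have hu'v : Integrable (g' * p) := h2.congr (Filter.Eventually.of_forall fun y => rfl)
  have huv : Integrable (g * p) := h3.congr (Filter.Eventually.of_forall fun y => rfl)
  have key := integral_mul_deriv_eq_deriv_mul_of_integrable (fun x _ => hg x) (fun y _ => hv y) huv' hu'v huv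
  have lhs : ∫ y, g y * v' y = -(σ ^ 2)⁻¹ * ∫ y, g y * ((y - θ) * p y) := by
    rw [← integral_const_mul]
    congr 1
    funext y
    simp only [hv'def]
    ring
  rw [lhs] at key
  have hσ2 : (σ:ℝ) ^ 2 ≠ 0 := by positivity
  have := key
  field_simp at this ⊢
  linarith [this]

lemma integral_normalPDF {σ : ℝ} (hσ : 0 < σ) (θ : ℝ) : ∫ y, normalPDF θ σ y = 1 := by
  have hb : (0:ℝ) < (2 * σ ^ 2)⁻¹ := by positivity
  have h2π : 0 < Real.sqrt (2 * Real.pi) := Real.sqrt_pos.2 (by positivity)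
  calc ∫ y, normalPDF θ σ y
      = ∫ y, (σ * Real.sqrt (2 * Real.pi))⁻¹ * Real.exp (-(2 * σ ^ 2)⁻¹ * (y - θ) ^ 2) := by
        simp_rw [normalPDF_eq hσ]
    _ = (σ * Real.sqrt (2 * Real.pi))⁻¹ * ∫ y, Real.exp (-(2 * σ ^ 2)⁻¹ * (y - θ) ^ 2) :=
        integral_const_mul _ _
    _ = (σ * Real.sqrt (2 * Real.pi))⁻¹ * ∫ y, Real.exp (-(2 * σ ^ 2)⁻¹ * y ^ 2) := by
        rw [integral_sub_right_eq_self (fun y => Real.exp (-(2 * σ ^ 2)⁻¹ * y ^ 2)) θ]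
    _ = (σ * Real.sqrt (2 * Real.pi))⁻¹ * Real.sqrt (Real.pi / (2 * σ ^ 2)⁻¹) := by
        rw [integral_gaussian]
    _ = 1 := by
        have h : Real.pi / (2 * σ ^ 2)⁻¹ = σ ^ 2 * (2 * Real.pi) := by
          field_simp
        rw [h, Real.sqrt_mul (sq_nonneg σ), Real.sqrt_sq hσ.le]
        field_simp

end SteinAux

open SteinAux

/-- **Stein's unbiased risk identity**: for `Y ∼ N(θ, σ²)` and `δ` continuously differentiable
with bounded derivative,
`E[(δ(Y) − θ)²] = E[(δ(Y) − Y)²] + 2σ² E[δ′(Y) − 1] + σ²`. -/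
theorem stein_unbiased_risk_identity (σ θ : ℝ) (hσ : 0 < σ)
    (δ : ℝ → ℝ) (hδ : ContDiff ℝ 1 δ) (M : ℝ) (hM : ∀ y : ℝ, |deriv δ y| ≤ M) :
    ∫ y, (δ y - θ) ^ 2 * normalPDF θ σ y
      = (∫ y, (δ y - y) ^ 2 * normalPDF θ σ y)
        + 2 * σ ^ 2 * (∫ y, (deriv δ y - 1) * normalPDF θ σ y) + σ ^ 2 := by
  have hcδ : Continuous δ := hδ.continuous
  have hcδ' : Continuous (deriv δ) := hδ.continuous_deriv le_rfl
  have hdiff : Differentiable ℝ δ := hδ.differentiable one_ne_zero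
  have hM0 : 0 ≤ M := (abs_nonneg _).trans (hM 0)
  set K : ℝ := |δ θ - θ| + M + 1 with hKdef
  have hK1 : M + 1 ≤ K := by
    have := abs_nonneg (δ θ - θ); linarith
  have hKpos : 0 < K := by positivity
  have hlip : ∀ y, |δ y - δ θ| ≤ M * |y - θ| := by
    intro y
    have h := Convex.norm_image_sub_le_of_norm_deriv_le
      (f := δ) (s := univ) (fun x _ => hdiff x)
      (fun x _ => by simpa [Real.norm_eq_abs] using hM x) convex_univ (mem_univ θ) (mem_univ y)
    simpa [Real.norm_eq_abs] using h
  have hg_bound : ∀ y, |δ y - y| ≤ K * (1 + |y - θ|) := by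
    intro y
    have h1 := hlip y
    have h2 : |δ y - y| ≤ |δ y - δ θ| + |δ θ - θ| + |y - θ| := by
      calc |δ y - y| = |(δ y - δ θ) + (δ θ - θ) + (θ - y)| := by ring_nf
        _ ≤ |(δ y - δ θ) + (δ θ - θ)| + |θ - y| := abs_add_le _ _
        _ ≤ |δ y - δ θ| + |δ θ - θ| + |θ - y| := by
            have := abs_add_le (δ y - δ θ) (δ θ - θ); linarith
        _ = |δ y - δ θ| + |δ θ - θ| + |y - θ| := by rw [abs_sub_comm θ y]
    have h3 := abs_nonneg (y - θ)
    have h4 := abs_nonneg (δ θ - θ)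
    nlinarith
  -- Integrability facts
  have sq1 : ∀ t : ℝ, (0:ℝ) ≤ (1 + |t|) ^ 2 := fun t => by positivity
  have I1 : Integrable fun y => (δ y - y) ^ 2 * normalPDF θ σ y := by
    apply integrable_growth_mul_normalPDF hσ
      ((hcδ.sub continuous_id).pow 2).aestronglyMeasurable (A := K ^ 2)
    intro y
    show |(δ y - y) ^ 2| ≤ K ^ 2 * (1 + |y - θ|) ^ 2
    have h := hg_bound y
    have h0 := abs_nonneg (δ y - y)
    have h3 := abs_nonneg (y - θ)
    rw [abs_of_nonneg (sq_nonneg (δ y - y)), ← sq_abs]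
    nlinarith
  have I2 : Integrable fun y => (δ y - y) * ((y - θ) * normalPDF θ σ y) := by
    have := integrable_growth_mul_normalPDF hσ (θ := θ)
      (((hcδ.sub continuous_id).mul (continuous_id.sub continuous_const)).aestronglyMeasurable)
      (A := K) (f := fun y => (δ y - y) * (y - θ)) ?_
    · apply this.congr
      exact Filter.Eventually.of_forall fun y => by ring
    · intro y
      show |(δ y - y) * (y - θ)| ≤ K * (1 + |y - θ|) ^ 2
      have h := hg_bound y
      have h0 := abs_nonneg (δ y - y)
      have h3 := abs_nonneg (y - θ)
      rw [abs_mul]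
      nlinarith
  have I3 : Integrable fun y => (deriv δ y - 1) * normalPDF θ σ y := by
    apply integrable_growth_mul_normalPDF hσ
      (hcδ'.sub continuous_const).aestronglyMeasurable (A := K)
    intro y
    show |deriv δ y - 1| ≤ K * (1 + |y - θ|) ^ 2
    have h := hM y
    have h1 : |deriv δ y - 1| ≤ M + 1 := by
      have h2 : |deriv δ y - 1| ≤ |deriv δ y| + |(1:ℝ)| := abs_sub _ _
      have h4 : |(1:ℝ)| = 1 := abs_one
      linarith
    have h3 := abs_nonneg (y - θ)
    have hsq : (1:ℝ) ≤ (1 + |y - θ|) ^ 2 := by nlinarith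
    have h5 := mul_le_mul_of_nonneg_left hsq hKpos.le
    linarith
  have I4 : Integrable fun y => (δ y - y) * normalPDF θ σ y := by
    apply integrable_growth_mul_normalPDF hσ
      (hcδ.sub continuous_id).aestronglyMeasurable (A := K)
    intro y
    show |δ y - y| ≤ K * (1 + |y - θ|) ^ 2
    have h := hg_bound y
    have h3 := abs_nonneg (y - θ)
    have hsq : (1 + |y - θ|) ≤ (1 + |y - θ|) ^ 2 := by nlinarith
    have h5 := mul_le_mul_of_nonneg_left hsq hKpos.le
    linarith
  have I5 : Integrable fun y => (y - θ) * ((y - θ) * normalPDF θ σ y) := by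
    have := integrable_growth_mul_normalPDF hσ (θ := θ)
      (((continuous_id.sub continuous_const).mul
        (continuous_id.sub continuous_const)).aestronglyMeasurable)
      (A := 1) (f := fun y => (y - θ) * (y - θ)) ?_
    · apply this.congr
      exact Filter.Eventually.of_forall fun y => by ring
    · intro y
      show |(y - θ) * (y - θ)| ≤ 1 * (1 + |y - θ|) ^ 2
      have h3 := abs_nonneg (y - θ)
      rw [abs_mul]
      nlinarith
  have I6 : Integrable fun y => (1:ℝ) * normalPDF θ σ y := by
    apply integrable_growth_mul_normalPDF hσ
      continuous_const.aestronglyMeasurable (A := 1)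
    intro y
    show |(1:ℝ)| ≤ 1 * (1 + |y - θ|) ^ 2
    have h3 := abs_nonneg (y - θ)
    rw [abs_one]
    nlinarith
  have I7 : Integrable fun y => (y - θ) * normalPDF θ σ y := by
    apply integrable_growth_mul_normalPDF hσ
      (continuous_id.sub continuous_const).aestronglyMeasurable (A := 1)
    intro y
    show |y - θ| ≤ 1 * (1 + |y - θ|) ^ 2
    have h3 := abs_nonneg (y - θ)
    nlinarith
  -- Stein's lemma applications
  have S1 : ∫ y, (δ y - y) * ((y - θ) * normalPDF θ σ y)
      = σ ^ 2 * ∫ y, (deriv δ y - 1) * normalPDF θ σ y := by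
    apply stein hσ _ _ ?_ I2 I3 I4
    intro x
    exact ((hdiff x).hasDerivAt).sub (hasDerivAt_id x)
  have S2 : ∫ y, (y - θ) * ((y - θ) * normalPDF θ σ y) = σ ^ 2 := by
    have h := stein hσ (fun y => y - θ) (fun _ => 1)
      (fun x => (hasDerivAt_id x).sub_const θ) I5 I6 I7
    rw [h]
    have : ∫ y, (1:ℝ) * normalPDF θ σ y = 1 := by
      simp_rw [one_mul]
      exact integral_normalPDF hσ θ
    rw [this, mul_one]
  -- Split the integral
  have hsplit : (fun y => (δ y - θ) ^ 2 * normalPDF θ σ y)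
      = fun y => ((δ y - y) ^ 2 * normalPDF θ σ y
          + 2 * ((δ y - y) * ((y - θ) * normalPDF θ σ y)))
          + (y - θ) * ((y - θ) * normalPDF θ σ y) := by
    funext y
    ring
  have hI2' : Integrable fun y => 2 * ((δ y - y) * ((y - θ) * normalPDF θ σ y)) :=
    I2.const_mul 2
  have hI12 : Integrable fun y => (δ y - y) ^ 2 * normalPDF θ σ y
      + 2 * ((δ y - y) * ((y - θ) * normalPDF θ σ y)) := I1.add hI2'
  rw [hsplit, integral_add hI12 I5, integral_add I1 hI2', integral_const_mul, S1, S2]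
  ring
end

section
/- The NPMLE is finitely supported (Appendix Proposition): fix observations y₁, …, y_n ∈ ℝ and let Ĝ be a Borel probability measure on [-c, c] maximizing G ↦ ∑_{i=1}^n log ∫ e^{−(yᵢ−θ)²/(2σ²)} dG(θ) over all Borel probability measures on [-c, c]. Then the support of Ĝ contains at most n points. -/
/-!
Write `φ i t = exp (-(y i - t) ^ 2 / (2 σ ^ 2))` and `L i = ∫ φ i dĜ`. Comparing `Ĝ` with
`(1 - ε) Ĝ + ε δ_θ` shows that the gradient `D θ = ∑ i, φ i θ / L i` is at most `n` on `[-c, c]`;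
since `∫ D dĜ = n`, it equals `n` on the support of `Ĝ`. Support points are thus maxima of `D` on
`[-c, c]`: the inner ones are critical points of `D`, Rolle gives one between consecutive ones, and
`D → 0` at `-∞` gives one more to their left, so `k` support points yield `2k - 2` critical
points. But `D'` is `exp (-θ ^ 2 / (2 σ ^ 2))` times an exponential polynomial
`∑ i, (α i + β i θ) exp (y i θ / σ ^ 2)`, which has fewer than `2n` zeros. Hence `k ≤ n`.
-/

open MeasureTheory Set

/-- The (topological) support of a measure on `ℝ`: the set of points all of whose
neighborhoods have positive measure. -/
def measureSupport (μ : MeasureTheory.Measure ℝ) : Set ℝ :=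
  {x : ℝ | ∀ U ∈ nhds x, μ U ≠ 0}

open Filter Topology Polynomial Real

theorem Set.encard_le_coe_of_forall_finset_card_le {α : Type*} {S : Set α} {m : ℕ}
    (h : ∀ T : Finset α, ↑T ⊆ S → T.card ≤ m) : S.encard ≤ m := by
  by_contra! hlt
  obtain ⟨T, hTS, hT⟩ := exists_subset_encard_eq (Order.add_one_le_of_lt hlt)
  have hTfin : T.Finite := finite_of_encard_eq_coe hT
  have hcard := h hTfin.toFinset (by simpa using hTS)
  rw [hTfin.encard_eq_coe_toFinset_card] at hT
  norm_cast at hT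
  omega

theorem Finset.two_mul_card_le_of_interleaved {α : Type*} [LinearOrder α] {Z t : Finset α}
    {w : α} (hw : w ∈ t) (hwZ : ∀ x ∈ Z, w ≤ x)
    (hbetween : ∀ x ∈ Z, ∀ y ∈ Z, x < y → ∃ z ∈ t, x < z ∧ z < y)
    (hinner : ∀ x ∈ Z, (∃ y ∈ Z, y < x) → (∃ y ∈ Z, x < y) → x ∈ t) :
    2 * Z.card ≤ t.card + 2 := by
  rcases Z.eq_empty_or_nonempty with rfl | hne
  · simp
  set p := Z.min' hne
  set s := insert w (Z.erase p)
  have hws : w ∉ Z.erase p := fun h => (mem_erase.1 h).1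
    (le_antisymm (hwZ p (Z.min'_mem hne)) (Z.min'_le w (mem_of_mem_erase h)))
  have hs : s.card = Z.card := by
    rw [card_insert_of_notMem hws, card_erase_add_one (Z.min'_mem hne)]
  have hinter : s.card ≤ (t \ s).card + 1 := by
    refine card_le_sdiff_of_interleaved fun x hx y hy hxy _ => ?_
    have hwx : w ≤ x := by
      rcases mem_insert.1 hx with rfl | hx
      · exact le_rfl
      · exact hwZ x (mem_of_mem_erase hx)
    obtain ⟨hyp, hyZ⟩ := mem_erase.1 <|
      (mem_insert.1 hy).resolve_left fun h => (hxy.trans_le (h ▸ hwx)).false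
    rcases mem_insert.1 hx with rfl | hx
    · obtain ⟨z, hzt, hpz, hzy⟩ :=
        hbetween p (Z.min'_mem hne) y hyZ ((Z.min'_le y hyZ).lt_of_ne' hyp)
      exact ⟨z, hzt, (hwZ p (Z.min'_mem hne)).trans_lt hpz, hzy⟩
    · exact hbetween x (mem_of_mem_erase hx) y hyZ hxy
  have hsub : s.erase (Z.max' hne) ⊆ t ∩ s := fun x hx => by
    obtain ⟨hxq, hx⟩ := mem_erase.1 hx
    refine mem_inter.2 ⟨?_, hx⟩
    rcases mem_insert.1 hx with rfl | hx
    · exact hw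
    obtain ⟨hxp, hxZ⟩ := mem_erase.1 hx
    exact hinner x hxZ ⟨p, Z.min'_mem hne, (Z.min'_le x hxZ).lt_of_ne' hxp⟩
      ⟨_, Z.max'_mem hne, (Z.le_max' x hxZ).lt_of_ne hxq⟩
  have := card_le_card hsub
  have := pred_card_le_card_erase (s := s) (a := Z.max' hne)
  have := card_sdiff_add_card_inter t s
  omega

theorem encard_setOf_eq_zero_le_deriv_add_one {f : ℝ → ℝ} (hf : Continuous f) :
    {x | f x = 0}.encard ≤ {x | deriv f x = 0}.encard + 1 := by
  by_cases hfin : {x | deriv f x = 0}.Finite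
  · rw [hfin.encard_eq_coe_toFinset_card]
    refine encard_le_coe_of_forall_finset_card_le fun T hT => ?_
    refine Finset.card_le_of_interleaved fun x hx y hy hxy _ => ?_
    obtain ⟨z, hz, hz'⟩ := exists_deriv_eq_zero hxy hf.continuousOn ((hT hx).trans (hT hy).symm)
    exact ⟨z, by simpa using hz', hz⟩
  · simp [Set.Infinite.encard_eq hfin]

theorem exists_deriv_ne_zero_of_eq_zero {g : ℝ → ℝ} (hg : Differentiable ℝ g) {x₀ : ℝ}
    (h₀ : g x₀ = 0) (hne : ∃ x, g x ≠ 0) : ∃ x, deriv g x ≠ 0 := by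
  by_contra! h
  obtain ⟨x, hx⟩ := hne
  exact hx ((is_const_of_deriv_eq_zero hg h x x₀).trans h₀)

theorem exists_deriv_eq_zero_le_of_tendsto_atBot {f : ℝ → ℝ} (hf : Continuous f) {L p q : ℝ}
    (hlim : Tendsto f atBot (𝓝 L)) (hp : L < f p) (hpq : p < q)
    (hmax : ∀ x ∈ Ioo p q, f x ≤ f p) : ∃ w ≤ p, deriv f w = 0 := by
  obtain ⟨A, hA⟩ := eventually_atBot.1 (hlim.eventually (gt_mem_nhds hp))
  set A' := min A (p - 1)
  have hA'p : A' < p := (min_le_right _ _).trans_lt (by linarith)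
  obtain ⟨w, ⟨hA'w, hwp⟩, hwmax⟩ :=
    isCompact_Icc.exists_isMaxOn (nonempty_Icc.2 hA'p.le) hf.continuousOn
  have hpw : f p ≤ f w := hwmax ⟨hA'p.le, le_rfl⟩
  replace hA'w : A' < w := hA'w.lt_of_ne fun h => by
    have := hA A' (min_le_left _ _)
    rw [h] at this
    linarith
  refine ⟨w, hwp, IsLocalMax.deriv_eq_zero ?_⟩
  filter_upwards [Ioo_mem_nhds hA'w (hwp.trans_lt hpq)] with x hx
  rcases le_or_gt x p with hxp | hpx
  · exact hwmax ⟨hx.1.le, hxp⟩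
  · exact (hmax x ⟨hpx, hx.2⟩).trans hpw

theorem two_mul_card_le_of_forall_eq_max {f : ℝ → ℝ} (hf : Continuous f) {L M a b : ℝ}
    (hlim : Tendsto f atBot (𝓝 L)) (hLM : L < M) (hle : ∀ x ∈ Icc a b, f x ≤ M)
    {Z : Finset ℝ} (hZ : ∀ x ∈ Z, x ∈ Icc a b ∧ f x = M)
    {t : Finset ℝ} (ht : ∀ x, deriv f x = 0 → x ∈ t) : 2 * Z.card ≤ t.card + 2 := by
  rcases le_or_gt Z.card 1 with hZ1 | hZ1
  · omega
  have hle' : ∀ x ∈ Z, ∀ y ∈ Z, ∀ u ∈ Icc x y, f u ≤ M := fun x hx y hy u hu =>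
    hle u ⟨(hZ x hx).1.1.trans hu.1, hu.2.trans (hZ y hy).1.2⟩
  have hne : Z.Nonempty := Finset.card_pos.1 (by omega)
  have hpZ := hZ _ (Z.min'_mem hne)
  obtain ⟨w, hwp, hw⟩ := exists_deriv_eq_zero_le_of_tendsto_atBot hf hlim (hpZ.2 ▸ hLM)
    (Z.min'_lt_max'_of_card hZ1) fun x hx =>
      hpZ.2 ▸ hle' _ (Z.min'_mem hne) _ (Z.max'_mem hne) x (Ioo_subset_Icc_self hx)
  refine Finset.two_mul_card_le_of_interleaved (ht w hw)
    (fun x hx => hwp.trans (Z.min'_le x hx)) (fun x hx y hy hxy => ?_)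
    fun x hx ⟨y, hy, hyx⟩ ⟨y', hy', hxy'⟩ => ht x (IsLocalMax.deriv_eq_zero ?_)
  · obtain ⟨z, hz, hz'⟩ :=
      exists_deriv_eq_zero hxy hf.continuousOn ((hZ x hx).2.trans (hZ y hy).2.symm)
    exact ⟨z, ht z hz', hz⟩
  · filter_upwards [Ioo_mem_nhds hyx hxy'] with u hu
    exact (hZ x hx).2 ▸ hle' y hy y' hy' u (Ioo_subset_Icc_self hu)

namespace Polynomial

variable {R : Type*} [Semiring R]

theorem degree_derivative_lt_of_degree_lt_succ {p : R[X]} {k : ℕ} (hp : p.degree < ↑(k + 1)) :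
    (derivative p).degree < k := by
  rw [degree_lt_iff_coeff_zero] at hp ⊢
  intro m hm
  simp [coeff_derivative, hp (m + 1) (by omega)]

theorem degree_derivative_add_C_mul_lt {p : R[X]} {k : ℕ} (hp : p.degree < k) (b : R) :
    (derivative p + C b * p).degree < k := by
  rw [degree_lt_iff_coeff_zero] at hp ⊢
  intro m hm
  simp [coeff_derivative, hp m hm, hp (m + 1) (by omega)]

end Polynomial

section ExpPoly

variable {ι : Type*} (s : Finset ι) (a : ι → ℝ) (P : ι → ℝ[X])

noncomputable def expPoly (x : ℝ) : ℝ := ∑ i ∈ s, (P i).eval x * exp (a i * x)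

theorem expPoly_sub_const (b x : ℝ) :
    expPoly s (fun i => a i - b) P x = exp (-(b * x)) * expPoly s a P x := by
  simp only [expPoly, Finset.mul_sum]
  refine Finset.sum_congr rfl fun i _ => ?_
  rw [mul_left_comm, ← exp_add]
  ring_nf

theorem setOf_expPoly_sub_const_eq_zero (b : ℝ) :
    {x | expPoly s (fun i => a i - b) P x = 0} = {x | expPoly s a P x = 0} := by
  ext x
  simp [expPoly_sub_const, exp_ne_zero]

theorem hasDerivAt_expPoly (x : ℝ) :
    HasDerivAt (expPoly s a P) (expPoly s a (fun i => derivative (P i) + C (a i) * P i) x) x := by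
  unfold expPoly
  refine (HasDerivAt.fun_sum fun i _ =>
    ((P i).hasDerivAt x).mul (((hasDerivAt_id' x).const_mul (a i)).exp)).congr_deriv ?_
  simp only [eval_add, eval_mul, eval_C]
  refine Finset.sum_congr rfl fun i _ => ?_
  ring

/- Induction on `∑ k i`: after dividing by `exp (a i₀ * x)` for some `P i₀ ≠ 0`, the derivative
is again an exponential polynomial, in which the degree bound at `i₀` has dropped by one, and by
Rolle it has at most one zero fewer. -/
theorem encard_setOf_expPoly_eq_zero_lt {k : ι → ℕ} (hk : ∀ i ∈ s, (P i).degree < k i)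
    (hne : ∃ x, expPoly s a P x ≠ 0) : {x | expPoly s a P x = 0}.encard < ∑ i ∈ s, k i := by
  classical
  obtain ⟨N, hN⟩ : ∃ N, ∑ i ∈ s, k i = N := ⟨_, rfl⟩
  induction N using Nat.strong_induction_on generalizing a P k with
  | _ N ih =>
  rw [hN]
  obtain ⟨i₀, hi₀, hP⟩ : ∃ i ∈ s, P i ≠ 0 := by
    by_contra! h
    obtain ⟨x, hx⟩ := hne
    exact hx (Finset.sum_eq_zero fun i hi => by simp [h i hi])
  have hk₀ : 0 < k i₀ := by exact_mod_cast (zero_le_degree_iff.2 hP).trans_lt (hk i₀ hi₀)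
  set g := expPoly s (fun i => a i - a i₀) P
  rw [← setOf_expPoly_sub_const_eq_zero s a P (a i₀)]
  rcases eq_empty_or_nonempty {x | g x = 0} with h0 | ⟨x₀, hx₀⟩
  · rw [h0, encard_empty, ← hN]
    exact_mod_cast hk₀.trans_le (Finset.single_le_sum (fun _ _ => Nat.zero_le _) hi₀)
  set Q := fun i => derivative (P i) + C (a i - a i₀) * P i
  have hg' : ∀ x, HasDerivAt g (expPoly s (fun i => a i - a i₀) Q x) x :=
    hasDerivAt_expPoly s _ P
  set k' := Function.update k i₀ (k i₀ - 1)
  have hk' : ∀ i ∈ s, (Q i).degree < k' i := fun i hi => by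
    rcases eq_or_ne i i₀ with rfl | h
    · simpa [Q, k'] using degree_derivative_lt_of_degree_lt_succ (Nat.sub_add_cancel hk₀ ▸ hk i hi)
    · simpa only [k', Function.update_of_ne h] using degree_derivative_add_C_mul_lt (hk i hi) _
  have hsum : ∑ i ∈ s, k' i < N := by
    rw [← hN, Finset.sum_update_of_mem hi₀, ← Finset.add_sum_erase s k hi₀,
      Finset.sdiff_singleton_eq_erase]
    omega
  have hne' : ∃ x, expPoly s (fun i => a i - a i₀) Q x ≠ 0 := by
    obtain ⟨x, hx⟩ := hne
    obtain ⟨x, hx⟩ := exists_deriv_ne_zero_of_eq_zero (fun x => (hg' x).differentiableAt) hx₀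
      ⟨x, by simpa [g, expPoly_sub_const, exp_ne_zero] using hx⟩
    exact ⟨x, (hg' x).deriv ▸ hx⟩
  calc {x | g x = 0}.encard ≤ {x | deriv g x = 0}.encard + 1 :=
        encard_setOf_eq_zero_le_deriv_add_one
          (continuous_iff_continuousAt.2 fun x => (hg' x).continuousAt)
    _ ≤ (∑ i ∈ s, k' i : ℕ) := by
        simp only [(hg' _).deriv]
        exact Order.add_one_le_of_lt (ih _ hsum _ _ hk' hne' rfl)
    _ < N := by exact_mod_cast hsum

end ExpPoly

theorem HasDerivAt.nonpos_of_forall_le_right {h : ℝ → ℝ} {h' x b : ℝ} (hd : HasDerivAt h h' x)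
    (hb : 0 < b) (hle : ∀ t ∈ Ioo 0 b, h (x + t) ≤ h x) : h' ≤ 0 := by
  refine le_of_tendsto hd.tendsto_slope_zero_right ?_
  filter_upwards [Ioo_mem_nhdsGT hb] with t ht
  exact smul_nonpos_of_nonneg_of_nonpos (inv_nonneg.2 ht.1.le) (sub_nonpos.2 (hle t ht))

theorem integral_pos_of_forall_pos {α : Type*} [MeasurableSpace α] {μ : Measure α} [NeZero μ]
    {f : α → ℝ} (hf : ∀ x, 0 < f x) (hfi : Integrable f μ) : 0 < ∫ x, f x ∂μ :=
  (integral_pos_iff_support_of_nonneg (fun x => (hf x).le) hfi).2 <| by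
    simp [Function.support, (hf _).ne', NeZero.ne μ]

theorem Continuous.integrable_of_nonneg_of_le {f : ℝ → ℝ} (hf : Continuous f) {C : ℝ}
    (h0 : ∀ t, 0 ≤ f t) (hC : ∀ t, f t ≤ C) (μ : Measure ℝ) [IsFiniteMeasure μ] :
    Integrable f μ :=
  Integrable.of_bound hf.aestronglyMeasurable C
    (ae_of_all _ fun t => by rw [Real.norm_of_nonneg (h0 t)]; exact hC t)

namespace MeasureTheory.Measure

theorem eqOn_support_of_ae_eq {X Y : Type*} [TopologicalSpace X] [MeasurableSpace X]
    [TopologicalSpace Y] [T2Space Y] {μ : Measure X} {f g : X → Y} (hf : Continuous f)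
    (hg : Continuous g) (h : f =ᵐ[μ] g) : EqOn f g μ.support := fun x hx => by
  by_contra hne
  exact subset_compl_support_of_isOpen (isClosed_eq hf hg).isOpen_compl (ae_iff.1 h) hne hx

variable {α : Type*} [MeasurableSpace α] (μ ν : Measure α) {ε : ℝ}

theorem isProbabilityMeasure_ofReal_smul_add [IsProbabilityMeasure μ] [IsProbabilityMeasure ν]
    (h0 : 0 ≤ ε) (h1 : ε ≤ 1) :
    IsProbabilityMeasure (ENNReal.ofReal (1 - ε) • μ + ENNReal.ofReal ε • ν) := by
  constructor
  simp only [add_apply, smul_apply, measure_univ, smul_eq_mul, mul_one]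
  rw [← ENNReal.ofReal_add (by linarith) h0, sub_add_cancel, ENNReal.ofReal_one]

theorem integral_ofReal_smul_add {f : α → ℝ} (hμ : Integrable f μ) (hν : Integrable f ν)
    (h0 : 0 ≤ ε) (h1 : ε ≤ 1) :
    ∫ x, f x ∂(ENNReal.ofReal (1 - ε) • μ + ENNReal.ofReal ε • ν)
      = (1 - ε) * ∫ x, f x ∂μ + ε * ∫ x, f x ∂ν := by
  rw [integral_add_measure (hμ.smul_measure ENNReal.ofReal_ne_top)
    (hν.smul_measure ENNReal.ofReal_ne_top), integral_smul_measure, integral_smul_measure,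
    ENNReal.toReal_ofReal (by linarith), ENNReal.toReal_ofReal h0, smul_eq_mul, smul_eq_mul]

end MeasureTheory.Measure

section Likelihood

variable {ι : Type*} [Fintype ι]

noncomputable def logLikelihood (φ : ι → ℝ → ℝ) (G : Measure ℝ) : ℝ :=
  ∑ i, log (∫ t, φ i t ∂G)

noncomputable def likelihoodGradient (φ : ι → ℝ → ℝ) (G : Measure ℝ) (θ : ℝ) : ℝ :=
  ∑ i, φ i θ / ∫ t, φ i t ∂G

variable {φ : ι → ℝ → ℝ} {C : ℝ} {K : Set ℝ} {Ĝ : Measure ℝ} [IsProbabilityMeasure Ĝ]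

theorem continuous_likelihoodGradient (hφ : ∀ i, Continuous (φ i)) (G : Measure ℝ) :
    Continuous (likelihoodGradient φ G) :=
  continuous_finsetSum _ fun i _ => (hφ i).div_const _

theorem likelihoodGradient_le_card (hK : MeasurableSet K) (hφ : ∀ i, Continuous (φ i))
    (hpos : ∀ i t, 0 < φ i t) (hC : ∀ i t, φ i t ≤ C) (hĜK : ∀ᵐ t ∂Ĝ, t ∈ K)
    (hmax : ∀ G : Measure ℝ, IsProbabilityMeasure G → (∀ᵐ t ∂G, t ∈ K) →
      logLikelihood φ G ≤ logLikelihood φ Ĝ) {θ : ℝ} (hθ : θ ∈ K) :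
    likelihoodGradient φ Ĝ θ ≤ Fintype.card ι := by
  have hint : ∀ i (G : Measure ℝ) [IsFiniteMeasure G], Integrable (φ i) G := fun i =>
    (hφ i).integrable_of_nonneg_of_le (fun t => (hpos i t).le) (hC i)
  set L := fun i => ∫ t, φ i t ∂Ĝ
  have hL : ∀ i, L i ≠ 0 := fun i => (integral_pos_of_forall_pos (hpos i) (hint i Ĝ)).ne'
  set F := fun ε => ∑ i, log (L i + ε * (φ i θ - L i))
  have hF : ∀ ε ∈ Ioo (0 : ℝ) 1, F (0 + ε) ≤ F 0 := by
    intro ε hε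
    have := hmax _
      (Measure.isProbabilityMeasure_ofReal_smul_add Ĝ (Measure.dirac θ) hε.1.le hε.2.le)
      (ae_add_measure_iff.2 ⟨Measure.ae_smul_measure hĜK _,
        Measure.ae_smul_measure ((ae_dirac_iff hK).2 hθ) _⟩)
    simp only [logLikelihood, Measure.integral_ofReal_smul_add _ _ (hint _ _) (hint _ _)
      hε.1.le hε.2.le, integral_dirac] at this
    simpa only [F, zero_add, zero_mul, add_zero, fun i =>
      show L i + ε * (φ i θ - L i) = (1 - ε) * L i + ε * φ i θ by ring] using this
  have hF' : HasDerivAt F (∑ i, (φ i θ / L i - 1)) 0 := HasDerivAt.fun_sum fun i _ => by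
    simpa [sub_div, hL i] using
      (((hasDerivAt_id' 0).mul_const (φ i θ - L i)).const_add (L i)).log (by simpa using hL i)
  simpa [likelihoodGradient, Finset.sum_sub_distrib] using
    hF'.nonpos_of_forall_le_right one_pos hF

theorem likelihoodGradient_eq_card_of_mem_support (hK : MeasurableSet K)
    (hφ : ∀ i, Continuous (φ i)) (hpos : ∀ i t, 0 < φ i t) (hC : ∀ i t, φ i t ≤ C)
    (hĜK : ∀ᵐ t ∂Ĝ, t ∈ K)
    (hmax : ∀ G : Measure ℝ, IsProbabilityMeasure G → (∀ᵐ t ∂G, t ∈ K) →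
      logLikelihood φ G ≤ logLikelihood φ Ĝ) {θ : ℝ} (hθ : θ ∈ Ĝ.support) :
    likelihoodGradient φ Ĝ θ = Fintype.card ι := by
  have hint : ∀ i, Integrable (φ i) Ĝ := fun i =>
    (hφ i).integrable_of_nonneg_of_le (fun t => (hpos i t).le) (hC i) Ĝ
  have hgrad : Integrable (likelihoodGradient φ Ĝ) Ĝ :=
    integrable_finsetSum _ fun i _ => (hint i).div_const _
  have hmean : ∫ θ, likelihoodGradient φ Ĝ θ ∂Ĝ = Fintype.card ι := by
    simp only [likelihoodGradient]
    rw [integral_finsetSum _ fun i _ => (hint i).div_const _]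
    simp [integral_div, div_self (integral_pos_of_forall_pos (hpos _) (hint _)).ne']
  have hnonneg : 0 ≤ᵐ[Ĝ] fun θ => Fintype.card ι - likelihoodGradient φ Ĝ θ := by
    filter_upwards [hĜK] with θ hθ
    exact sub_nonneg.2 (likelihoodGradient_le_card hK hφ hpos hC hĜK hmax hθ)
  have hzero := (integral_eq_zero_iff_of_nonneg_ae hnonneg ((integrable_const _).sub hgrad)).1
    (by simp [integral_sub (integrable_const _) hgrad, hmean])
  exact Measure.eqOn_support_of_ae_eq (continuous_likelihoodGradient hφ Ĝ) continuous_const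
    (hzero.mono fun θ h => (sub_eq_zero.1 h).symm) hθ

end Likelihood

section Gaussian

variable {σ : ℝ}

theorem hasDerivAt_exp_neg_sq_div (y θ : ℝ) :
    HasDerivAt (fun t => exp (-(y - t) ^ 2 / (2 * σ ^ 2)))
      ((y - θ) / σ ^ 2 * exp (-(y - θ) ^ 2 / (2 * σ ^ 2))) θ := by
  have := ((((hasDerivAt_id' θ).const_sub y).fun_pow 2).fun_neg.div_const (2 * σ ^ 2)).exp
  convert this using 1
  simp only [Nat.cast_ofNat]
  ring

theorem tendsto_exp_neg_sq_div_atBot (hσ : σ ≠ 0) (y : ℝ) :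
    Tendsto (fun t => exp (-(y - t) ^ 2 / (2 * σ ^ 2))) atBot (𝓝 0) := by
  refine tendsto_exp_atBot.comp ?_
  have hsq : Tendsto (fun t : ℝ => (y - t) ^ 2) atBot atTop := (tendsto_pow_atTop two_ne_zero).comp
    (tendsto_atTop_add_const_left _ _ tendsto_neg_atBot_atTop)
  simpa [neg_div] using (hsq.atTop_div_const (by positivity : (0 : ℝ) < 2 * σ ^ 2))

theorem exp_neg_sq_div_eq (y t : ℝ) :
    exp (-(y - t) ^ 2 / (2 * σ ^ 2))
      = exp (-t ^ 2 / (2 * σ ^ 2)) * (exp (-y ^ 2 / (2 * σ ^ 2)) * exp (y / σ ^ 2 * t)) := by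
  rw [← exp_add, ← exp_add]
  ring_nf

variable {ι : Type*} [Fintype ι]

theorem tendsto_sum_exp_neg_sq_div_atBot (hσ : σ ≠ 0) (y w : ι → ℝ) :
    Tendsto (fun t => ∑ i, exp (-(y i - t) ^ 2 / (2 * σ ^ 2)) / w i) atBot (𝓝 0) := by
  simpa using tendsto_finsetSum Finset.univ fun i _ =>
    (tendsto_exp_neg_sq_div_atBot hσ (y i)).div_const (w i)

theorem encard_setOf_deriv_sum_exp_neg_sq_div_eq_zero_lt [Nonempty ι] (hσ : σ ≠ 0)
    (y w : ι → ℝ) (hw : ∀ i, 0 < w i) :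
    {θ | deriv (fun t => ∑ i, exp (-(y i - t) ^ 2 / (2 * σ ^ 2)) / w i) θ = 0}.encard
      < (2 * Fintype.card ι : ℕ) := by
  set P : ι → ℝ[X] := fun i => C (exp (-y i ^ 2 / (2 * σ ^ 2)) / (σ ^ 2 * w i)) * (C (y i) - X)
  have hderiv : ∀ θ, deriv (fun t => ∑ i, exp (-(y i - t) ^ 2 / (2 * σ ^ 2)) / w i) θ
      = exp (-θ ^ 2 / (2 * σ ^ 2)) * expPoly Finset.univ (fun i => y i / σ ^ 2) P θ := by
    intro θ
    rw [(HasDerivAt.fun_sum fun i _ =>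
      (hasDerivAt_exp_neg_sq_div (y i) θ).div_const (w i)).deriv, expPoly, Finset.mul_sum]
    refine Finset.sum_congr rfl fun i _ => ?_
    simp only [P, eval_mul, eval_C, eval_sub, eval_X, exp_neg_sq_div_eq (y i) θ]
    field_simp [(hw i).ne']
  have hzeros : {θ | deriv (fun t => ∑ i, exp (-(y i - t) ^ 2 / (2 * σ ^ 2)) / w i) θ = 0}
      = {θ | expPoly Finset.univ (fun i => y i / σ ^ 2) P θ = 0} := by
    ext θ
    simp [hderiv, exp_ne_zero]
  rw [hzeros, show 2 * Fintype.card ι = ∑ _i : ι, 2 by simp [mul_comm]]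
  refine encard_setOf_expPoly_eq_zero_lt _ _ _ (fun i _ => ?_) ?_
  · simp only [P]
    compute_degree!
  · obtain ⟨b, hb⟩ := (finite_range y).bddBelow
    refine ⟨b - 1, (Finset.sum_pos (fun i _ => ?_) Finset.univ_nonempty).ne'⟩
    have : b ≤ y i := hb (mem_range_self i)
    simp only [P, eval_mul, eval_C, eval_sub, eval_X]
    exact mul_pos (mul_pos (div_pos (exp_pos _) (mul_pos (by positivity) (hw i))) (by linarith))
      (exp_pos _)

end Gaussian

theorem measureSupport_eq_support (μ : Measure ℝ) : measureSupport μ = μ.support := by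
  ext x
  simp [measureSupport, Measure.mem_support_iff_forall, pos_iff_ne_zero]

theorem npmle_finite_support_general (σ c : ℝ) (hσ : 0 < σ)
    (n : ℕ) (hn : 0 < n) (y : Fin n → ℝ)
    (Ghat : Measure ℝ) [IsProbabilityMeasure Ghat] (hGhatSupp : ∀ᵐ t ∂Ghat, t ∈ Icc (-c) c)
    (hMLE : ∀ (G : Measure ℝ), IsProbabilityMeasure G → (∀ᵐ t ∂G, t ∈ Icc (-c) c) →
      ∑ i, Real.log (∫ t, Real.exp (-(y i - t) ^ 2 / (2 * σ ^ 2)) ∂G)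
        ≤ ∑ i, Real.log (∫ t, Real.exp (-(y i - t) ^ 2 / (2 * σ ^ 2)) ∂Ghat)) :
    (measureSupport Ghat).Finite ∧ (measureSupport Ghat).ncard ≤ n := by
  set φ : Fin n → ℝ → ℝ := fun i t => exp (-(y i - t) ^ 2 / (2 * σ ^ 2))
  have hφ : ∀ i, Continuous (φ i) := fun i => by fun_prop
  have hpos : ∀ i t, 0 < φ i t := fun i t => exp_pos _
  have hle : ∀ i t, φ i t ≤ 1 := fun i t => exp_le_one_iff.2 <|
    div_nonpos_of_nonpos_of_nonneg (neg_nonpos.2 (sq_nonneg _)) (by positivity)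
  have : Nonempty (Fin n) := Fin.pos_iff_nonempty.1 hn
  have hcrit := encard_setOf_deriv_sum_exp_neg_sq_div_eq_zero_lt hσ.ne' y _ fun i =>
    integral_pos_of_forall_pos (hpos i) ((hφ i).integrable_of_nonneg_of_le
      (fun t => (hpos i t).le) (hle i) Ghat)
  have hfin := finite_of_encard_le_coe hcrit.le
  have hcard : ∀ Z : Finset ℝ, ↑Z ⊆ Ghat.support → Z.card ≤ n := by
    intro Z hZ
    have := two_mul_card_le_of_forall_eq_max (t := hfin.toFinset)
      (continuous_likelihoodGradient hφ Ghat) (tendsto_sum_exp_neg_sq_div_atBot hσ.ne' y _)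
      (by simpa using hn)
      (fun θ => likelihoodGradient_le_card measurableSet_Icc hφ hpos hle hGhatSupp hMLE)
      (fun x hx => ⟨Measure.support_subset_of_isClosed isClosed_Icc hGhatSupp (hZ hx),
        likelihoodGradient_eq_card_of_mem_support measurableSet_Icc hφ hpos hle hGhatSupp hMLE
          (hZ hx)⟩)
      (fun x hx => hfin.mem_toFinset.2 hx)
    rw [hfin.encard_eq_coe_toFinset_card, Fintype.card_fin] at hcrit
    have hlt : hfin.toFinset.card < 2 * n := by exact_mod_cast hcrit
    omega
  rw [measureSupport_eq_support]
  exact encard_le_coe_iff_finite_ncard_le.1 (encard_le_coe_of_forall_finset_card_le hcard)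

/-- **The NPMLE is finitely supported**: any Borel probability measure `Ĝ` on `[-c, c]`
maximizing the log-likelihood `G ↦ ∑ᵢ log ∫ e^{−(yᵢ−θ)²/(2σ²)} dG(θ)` has at most `n`
support points. -/
theorem npmle_finite_support (σ c : ℝ) (hσ : 0 < σ) (hc : 0 < c)
    (n : ℕ) (hn : 0 < n) (y : Fin n → ℝ)
    (Ghat : Measure ℝ) [IsProbabilityMeasure Ghat] (hGhatSupp : ∀ᵐ t ∂Ghat, t ∈ Icc (-c) c)
    (hMLE : ∀ (G : Measure ℝ), IsProbabilityMeasure G → (∀ᵐ t ∂G, t ∈ Icc (-c) c) →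
      ∑ i, Real.log (∫ t, Real.exp (-(y i - t) ^ 2 / (2 * σ ^ 2)) ∂G)
        ≤ ∑ i, Real.log (∫ t, Real.exp (-(y i - t) ^ 2 / (2 * σ ^ 2)) ∂Ghat)) :
    (measureSupport Ghat).Finite ∧ (measureSupport Ghat).ncard ≤ n :=
  npmle_finite_support_general σ c hσ n hn y Ghat hGhatSupp hMLE
end
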